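/- Let ρ0 and ρ1 be n×n complex density matrices with a priori probabilities η0, η1 > 0, η0 + η1 = 1, let F = Tr(√(√ρ0 · ρ1 · √ρ0)) > 0, and let P0 be the orthogonal projection onto the range of ρ0 with Tr(P0 ρ1) > 0. If √η0 · F ≤ √η1 · Tr(P0 ρ1) (third regime), then for any USD POVM (E0, E1, E?) the failure probability Q = η0·Tr(E? ρ0) + η1·Tr(E? ρ1) satisfies Q ≥ η0·F²/Tr(P0 ρ1) + η1·Tr(P0 ρ1). -/

import Mathlib

open Matrix
open scoped ComplexOrder

/-- The positive semidefinite square root of a matrix (zero if the matrix is not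
positive semidefinite). -/
noncomputable def msqrt {n : ℕ} (A : Matrix (Fin n) (Fin n) ℂ) : Matrix (Fin n) (Fin n) ℂ :=
  open scoped Classical in
  if h : A.PosSemidef then
    (h.1.eigenvectorUnitary : Matrix (Fin n) (Fin n) ℂ) *
      diagonal (((↑) : ℝ → ℂ) ∘ Real.sqrt ∘ h.1.eigenvalues) *
      (star h.1.eigenvectorUnitary : Matrix (Fin n) (Fin n) ℂ)
  else 0

/-- `P` is the orthogonal projection onto the range (support) of `A`. -/
def IsRangeProj {n : ℕ} (A P : Matrix (Fin n) (Fin n) ℂ) : Prop :=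
  P.IsHermitian ∧ P * P = P ∧
    LinearMap.range P.mulVecLin = LinearMap.range A.mulVecLin

/-!
Positivity turns `Tr(E₁ρ₀) = 0` into `E₁ρ₀ = 0`, so `E₁` vanishes on the support of `ρ₀`; being
also `≤ 1`, it satisfies `E₁ ≤ 1 - P₀`, whence `Tr(E? ρ₁) ≥ Tr(P₀ρ₁)`. Since likewise
`E₀√ρ₁ = 0`, we have `√ρ₀ E? √ρ₁ = √ρ₀ √ρ₁`, and splitting this as `(√ρ₀ √E?)(√E? √ρ₁)` the
Hölder inequality `‖XY‖₁ ≤ ‖X‖₂ ‖Y‖₂` gives `F² ≤ Tr(E? ρ₀) Tr(E? ρ₁)`. Hence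
`Q ≥ η₀F²/q + η₁q` with `q = Tr(E? ρ₁) ≥ Tr(P₀ρ₁)`, and `q ↦ η₀F²/q + η₁q` is increasing for
`q ≥ √(η₀/η₁) F`, which the third-regime condition says of `Tr(P₀ρ₁)`.
-/

theorem div_add_mul_le_div_add_mul {a b x y : ℝ} (ha : 0 ≤ a) (hx : 0 < x) (hxy : x ≤ y)
    (h : a ≤ b * x ^ 2) : a / x + b * x ≤ a / y + b * y := by
  have hy : 0 < y := hx.trans_le hxy
  have hb : 0 ≤ b := nonneg_of_mul_nonneg_left (ha.trans h) (by positivity)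
  rw [div_add' _ _ _ hx.ne', div_add' _ _ _ hy.ne', div_le_div_iff₀ hx hy]
  nlinarith [mul_le_mul_of_nonneg_left hxy (mul_nonneg hb hx.le), sub_nonneg.mpr hxy]

namespace Matrix

open scoped MatrixOrder

variable {ι : Type*} [Fintype ι] [DecidableEq ι]

theorem norm_trace_mul_conjTranspose_sq_le (X Y : Matrix ι ι ℂ) :
    ‖(X * Yᴴ).trace‖ ^ 2 ≤ (X * Xᴴ).trace.re * (Y * Yᴴ).trace.re := by
  let _ := toMatrixSeminormedAddCommGroup (1 : Matrix ι ι ℂ) PosSemidef.one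
  let _ := toMatrixInnerProductSpace (1 : Matrix ι ι ℂ) PosSemidef.one
  have h := inner_mul_inner_self_le (𝕜 := ℂ) Y X
  have inner_eq (A B : Matrix ι ι ℂ) : inner ℂ A B = (B * Aᴴ).trace := by
    show (B * 1 * Aᴴ).trace = _
    rw [Matrix.mul_one]
  rw [inner_eq, inner_eq, inner_eq, inner_eq, show Y * Xᴴ = (X * Yᴴ)ᴴ by simp,
    trace_conjTranspose, norm_star] at h
  rw [sq, mul_comm (X * Xᴴ).trace.re]
  exact h

theorem PosSemidef.trace_mul_nonneg {X Y : Matrix ι ι ℂ} (hX : X.PosSemidef)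
    (hY : Y.PosSemidef) : 0 ≤ (X * Y).trace := by
  obtain ⟨B, rfl⟩ := CStarAlgebra.nonneg_iff_eq_star_mul_self.mp hY.nonneg
  rw [star_eq_conjTranspose, ← Matrix.mul_assoc, trace_mul_comm, ← Matrix.mul_assoc]
  exact (hX.mul_mul_conjTranspose_same B).trace_nonneg

theorem re_trace_mul_le_of_le {X Y ρ : Matrix ι ι ℂ} (hXY : X ≤ Y) (hρ : ρ.PosSemidef) :
    (X * ρ).trace.re ≤ (Y * ρ).trace.re := by
  have h := (Complex.nonneg_iff.mp ((le_iff.mp hXY).trace_mul_nonneg hρ)).1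
  rw [Matrix.sub_mul, trace_sub, Complex.sub_re] at h
  linarith

theorem PosSemidef.mul_eq_zero_of_trace_mul_mul_conjTranspose_eq_zero {X B : Matrix ι ι ℂ}
    (hX : X.PosSemidef) (h : (X * (B * Bᴴ)).trace = 0) : X * B = 0 := by
  obtain ⟨A, rfl⟩ := CStarAlgebra.nonneg_iff_eq_star_mul_self.mp hX.nonneg
  rw [star_eq_conjTranspose] at h ⊢
  have hAB : A * B = 0 := by
    rw [← trace_mul_conjTranspose_self_eq_zero_iff, ← h]
    simp only [conjTranspose_mul, ← Matrix.mul_assoc]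
    rw [trace_mul_comm]
    simp only [Matrix.mul_assoc]
  rw [Matrix.mul_assoc, hAB, Matrix.mul_zero]

theorem mul_eq_zero_of_range_le {X A P : Matrix ι ι ℂ} (hXA : X * A = 0)
    (hPA : LinearMap.range P.mulVecLin ≤ LinearMap.range A.mulVecLin) : X * P = 0 := by
  have hA : LinearMap.range A.mulVecLin ≤ LinearMap.ker X.mulVecLin :=
    LinearMap.range_le_ker_iff.mpr (by rw [← mulVecLin_mul, hXA, mulVecLin_zero])
  apply Matrix.toLin'.injective
  rw [toLin'_mul, map_zero]
  exact LinearMap.range_le_ker_iff.mp (hPA.trans hA)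

theorem IsHermitian.le_one_of_mul_self_eq {P : Matrix ι ι ℂ} (hP : P.IsHermitian)
    (hPP : P * P = P) : P ≤ 1 := by
  have h := PosSemidef.one.mul_mul_conjTranspose_same (1 - P)
  rwa [Matrix.mul_one, conjTranspose_sub, conjTranspose_one, hP.eq, Matrix.sub_mul,
    Matrix.mul_sub, Matrix.mul_sub, Matrix.one_mul, Matrix.mul_one, Matrix.one_mul, hPP,
    sub_self, sub_zero, ← le_iff] at h

theorem le_one_sub_of_mul_eq_zero {E P : Matrix ι ι ℂ} (hE : E.IsHermitian) (hE1 : E ≤ 1)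
    (hP : P.IsHermitian) (hPP : P * P = P) (hEP : E * P = 0) : E ≤ 1 - P := by
  have hPE : P * E = 0 := by
    simpa [hP.eq, hE.eq] using congrArg conjTranspose hEP
  have h := (le_iff.mp hE1).mul_mul_conjTranspose_same (1 - P)
  rw [le_iff]
  convert h using 1
  rw [conjTranspose_sub, conjTranspose_one, hP.eq]
  simp only [Matrix.mul_sub, Matrix.sub_mul, Matrix.mul_one, Matrix.one_mul, hPP, hPE, hEP,
    Matrix.zero_mul]
  abel

/-- Inverting only the nonzero eigenvalues (`0⁻¹ = 0` in `ℝ`), this is the Moore–Penrose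
pseudo-inverse of a Hermitian matrix. -/
noncomputable def pinv (M : Matrix ι ι ℂ) : Matrix ι ι ℂ := cfc (·⁻¹ : ℝ → ℝ) M

theorem isHermitian_pinv (M : Matrix ι ι ℂ) : (pinv M).IsHermitian := cfc_predicate _ _

theorem pinv_mul_self_mul_pinv {M : Matrix ι ι ℂ} (hM : M.IsHermitian) :
    pinv M * M * pinv M = pinv M := by
  have hcont (f : ℝ → ℝ) : ContinuousOn f (spectrum ℝ M) := finite_real_spectrum.continuousOn f
  conv_lhs => enter [1, 2]; rw [← cfc_id ℝ M hM.isSelfAdjoint]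
  rw [pinv, ← cfc_mul _ _ M (hcont _) (hcont _), ← cfc_mul _ _ M (hcont _) (hcont _)]
  exact cfc_congr fun x _ => by simpa only [id, inv_inv] using mul_inv_mul_cancel x⁻¹

theorem mul_pinv_mul_cfc {M : Matrix ι ι ℂ} (hM : M.IsHermitian) {f : ℝ → ℝ} (hf : f 0 = 0) :
    M * pinv M * cfc f M = cfc f M := by
  have hcont (f : ℝ → ℝ) : ContinuousOn f (spectrum ℝ M) := finite_real_spectrum.continuousOn f
  conv_lhs => enter [1, 1]; rw [← cfc_id ℝ M hM.isSelfAdjoint]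
  rw [pinv, ← cfc_mul _ _ M (hcont _) (hcont _), ← cfc_mul _ _ M (hcont _) (hcont _)]
  refine cfc_congr fun x _ => ?_
  rcases eq_or_ne x 0 with rfl | hx
  · simp [hf]
  · rw [id, mul_inv_cancel₀ hx, one_mul]

end Matrix

section msqrt

open scoped MatrixOrder

variable {n : ℕ}

theorem msqrt_eq_cfc {A : Matrix (Fin n) (Fin n) ℂ} (hA : A.PosSemidef) :
    msqrt A = cfc Real.sqrt A := by
  rw [msqrt, dif_pos hA, hA.1.cfc_eq, IsHermitian.cfc, Unitary.conjStarAlgAut_apply]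
  rfl

theorem posSemidef_msqrt (A : Matrix (Fin n) (Fin n) ℂ) : (msqrt A).PosSemidef := by
  by_cases hA : A.PosSemidef
  · rw [msqrt_eq_cfc hA]
    exact (cfc_nonneg fun x _ => Real.sqrt_nonneg x).posSemidef
  · rw [msqrt, dif_neg hA]
    exact PosSemidef.zero

theorem msqrt_mul_self {A : Matrix (Fin n) (Fin n) ℂ} (hA : A.PosSemidef) :
    msqrt A * msqrt A = A := by
  rw [msqrt_eq_cfc hA, ← cfc_mul Real.sqrt Real.sqrt A]
  conv_rhs => rw [← cfc_id' ℝ A hA.1]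
  exact cfc_congr fun x hx => Real.mul_self_sqrt (spectrum_nonneg_of_nonneg hA.nonneg hx)

theorem mul_msqrt_eq_zero_of_trace_mul_eq_zero {X Y : Matrix (Fin n) (Fin n) ℂ}
    (hX : X.PosSemidef) (hY : Y.PosSemidef) (h : (X * Y).trace = 0) : X * msqrt Y = 0 := by
  refine hX.mul_eq_zero_of_trace_mul_mul_conjTranspose_eq_zero ?_
  rwa [(posSemidef_msqrt Y).1.eq, msqrt_mul_self hY]

/- With `Q` the pseudo-inverse of `M = CCᴴ`, `√M = A (B Cᴴ Q √M)` and `Cᴴ Q C` is an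
orthogonal projection, so Cauchy–Schwarz for the Frobenius inner product applies. -/
theorem sq_re_trace_msqrt_mul_conjTranspose_le (A B : Matrix (Fin n) (Fin n) ℂ) :
    (msqrt (A * B * (A * B)ᴴ)).trace.re ^ 2 ≤ (A * Aᴴ).trace.re * (B * Bᴴ).trace.re := by
  set C := A * B
  set M := C * Cᴴ
  have hM : M.PosSemidef := posSemidef_self_mul_conjTranspose C
  have hNN : msqrt M * msqrt M = M := msqrt_mul_self hM
  have hN : (msqrt M).IsHermitian := (posSemidef_msqrt M).1
  rw [msqrt_eq_cfc hM] at hNN hN ⊢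
  set N := cfc Real.sqrt M
  set Q := pinv M
  have hQ : Q.IsHermitian := isHermitian_pinv M
  have hMQN : M * Q * N = N := mul_pinv_mul_cfc hM.1 Real.sqrt_zero
  have hQMQ : Q * M * Q = Q := pinv_mul_self_mul_pinv hM.1
  set P := Cᴴ * Q * C
  have hP : P ≤ 1 := by
    refine IsHermitian.le_one_of_mul_self_eq (isHermitian_conjTranspose_mul_mul C hQ) ?_
    calc P * P = Cᴴ * (Q * M * Q) * C := by simp only [P, M, Matrix.mul_assoc]
      _ = P := by rw [hQMQ]
  set Y := N * Q * C * Bᴴ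
  have hAY : A * Yᴴ = N := by
    simp only [Y, conjTranspose_mul, conjTranspose_conjTranspose, hQ.eq, hN.eq]
    conv_rhs => rw [← hMQN]
    simp only [M, C, Matrix.mul_assoc]
  have hYY : (Y * Yᴴ).trace = (P * (Bᴴ * B)).trace := by
    have hYY' : Yᴴ * Y = B * P * Bᴴ := by
      calc Yᴴ * Y = B * (Cᴴ * (Q * (N * N) * Q) * C) * Bᴴ := by
            simp only [Y, conjTranspose_mul, conjTranspose_conjTranspose, hQ.eq, hN.eq,
              Matrix.mul_assoc]
        _ = B * P * Bᴴ := by rw [hNN, hQMQ]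
    rw [trace_mul_comm, hYY', trace_mul_cycle, trace_mul_comm]
  have hY : (Y * Yᴴ).trace.re ≤ (B * Bᴴ).trace.re := by
    rw [hYY, trace_mul_comm B]
    simpa using re_trace_mul_le_of_le hP (posSemidef_conjTranspose_mul_self B)
  have hAA : 0 ≤ (A * Aᴴ).trace.re := (posSemidef_self_mul_conjTranspose A).trace_nonneg.1
  calc N.trace.re ^ 2 ≤ ‖N.trace‖ ^ 2 :=
        sq_le_sq.mpr ((Complex.abs_re_le_norm _).trans (le_abs_self _))
    _ ≤ (A * Aᴴ).trace.re * (Y * Yᴴ).trace.re := hAY ▸ norm_trace_mul_conjTranspose_sq_le A Y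
    _ ≤ (A * Aᴴ).trace.re * (B * Bᴴ).trace.re := mul_le_mul_of_nonneg_left hY hAA

theorem sq_re_trace_msqrt_le_of_mul_eq {ρ0 ρ1 E : Matrix (Fin n) (Fin n) ℂ}
    (hρ0 : ρ0.PosSemidef) (hρ1 : ρ1.PosSemidef) (hE : E.PosSemidef)
    (h : msqrt ρ0 * E * msqrt ρ1 = msqrt ρ0 * msqrt ρ1) :
    (msqrt (msqrt ρ0 * ρ1 * msqrt ρ0)).trace.re ^ 2 ≤
      (E * ρ0).trace.re * (E * ρ1).trace.re := by
  set S0 := msqrt ρ0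
  set S1 := msqrt ρ1
  set G := msqrt E
  have hS0 : S0ᴴ = S0 := (posSemidef_msqrt ρ0).1.eq
  have hS1 : S1ᴴ = S1 := (posSemidef_msqrt ρ1).1.eq
  have hG : Gᴴ = G := (posSemidef_msqrt E).1.eq
  have hAB : S0 * G * (G * S1) = S0 * S1 := by
    rw [← h, ← msqrt_mul_self hE]
    simp only [G, Matrix.mul_assoc]
  have hM : S0 * S1 * (S0 * S1)ᴴ = S0 * ρ1 * S0 := by
    rw [conjTranspose_mul, hS0, hS1, ← msqrt_mul_self hρ1]
    simp only [S1, Matrix.mul_assoc]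
  have hA : (S0 * G * (S0 * G)ᴴ).trace = (E * ρ0).trace := by
    rw [conjTranspose_mul, hS0, hG, ← msqrt_mul_self hE, ← msqrt_mul_self hρ0]
    conv_lhs => rw [Matrix.mul_assoc, trace_mul_comm]
    simp only [S0, G, Matrix.mul_assoc]
  have hB : (G * S1 * (G * S1)ᴴ).trace = (E * ρ1).trace := by
    rw [conjTranspose_mul, hS1, hG, trace_mul_comm E, ← msqrt_mul_self hE,
      ← msqrt_mul_self hρ1]
    conv_lhs => rw [Matrix.mul_assoc, trace_mul_comm]
    simp only [S1, G, Matrix.mul_assoc]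
  simpa only [hAB, hM, hA, hB] using sq_re_trace_msqrt_mul_conjTranspose_le (S0 * G) (G * S1)

theorem IsRangeProj.re_trace_mul_le {ρ0 ρ1 E0 E1 Eq P0 : Matrix (Fin n) (Fin n) ℂ}
    (hP0 : IsRangeProj ρ0 P0) (hρ0 : ρ0.PosSemidef) (hρ1 : ρ1.PosSemidef)
    (hE0 : E0.PosSemidef) (hE1 : E1.PosSemidef) (hEq : Eq.PosSemidef)
    (hsum : E0 + E1 + Eq = 1) (husd0 : (E0 * ρ1).trace = 0) (husd1 : (E1 * ρ0).trace = 0) :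
    (P0 * ρ1).trace.re ≤ (Eq * ρ1).trace.re := by
  have hE1ρ0 : E1 * ρ0 = 0 := by
    rw [← msqrt_mul_self hρ0, ← Matrix.mul_assoc,
      mul_msqrt_eq_zero_of_trace_mul_eq_zero hE1 hρ0 husd1, zero_mul]
  have hE1P0 : E1 * P0 = 0 := mul_eq_zero_of_range_le hE1ρ0 hP0.2.2.le
  have hE1le : E1 ≤ 1 - P0 := le_one_sub_of_mul_eq_zero hE1.1
    (le_iff.mpr (by rw [← hsum, add_right_comm, add_sub_cancel_right]; exact hE0.add hEq))
    hP0.1 hP0.2.1 hE1P0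
  have hP0le : P0 ≤ E0 + Eq := by
    rw [le_iff] at hE1le ⊢
    convert hE1le using 1
    rw [← hsum]; abel
  simpa [add_mul, husd0] using re_trace_mul_le_of_le hP0le hρ1

theorem sq_re_trace_msqrt_le_of_usd {ρ0 ρ1 E0 E1 Eq : Matrix (Fin n) (Fin n) ℂ}
    (hρ0 : ρ0.PosSemidef) (hρ1 : ρ1.PosSemidef)
    (hE0 : E0.PosSemidef) (hE1 : E1.PosSemidef) (hEq : Eq.PosSemidef)
    (hsum : E0 + E1 + Eq = 1) (husd0 : (E0 * ρ1).trace = 0) (husd1 : (E1 * ρ0).trace = 0) :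
    (msqrt (msqrt ρ0 * ρ1 * msqrt ρ0)).trace.re ^ 2 ≤
      (Eq * ρ0).trace.re * (Eq * ρ1).trace.re := by
  refine sq_re_trace_msqrt_le_of_mul_eq hρ0 hρ1 hEq ?_
  have hE0S1 : E0 * msqrt ρ1 = 0 := mul_msqrt_eq_zero_of_trace_mul_eq_zero hE0 hρ1 husd0
  have hS0E1 : msqrt ρ0 * E1 = 0 := by
    simpa [(posSemidef_msqrt ρ0).1.eq, hE1.1.eq] using
      congrArg conjTranspose (mul_msqrt_eq_zero_of_trace_mul_eq_zero hE1 hρ0 husd1)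
  rw [show Eq = 1 - E0 - E1 by rw [← hsum]; abel, Matrix.mul_sub, Matrix.mul_sub,
    Matrix.sub_mul, Matrix.sub_mul, Matrix.mul_assoc _ E0, hE0S1, hS0E1]
  simp

end msqrt

theorem failure_bound_third_regime_general {n : ℕ}
    (ρ0 ρ1 E0 E1 Eq P0 : Matrix (Fin n) (Fin n) ℂ)
    (hρ0 : ρ0.PosSemidef)
    (hρ1 : ρ1.PosSemidef)
    (η0 η1 : ℝ) (hη0 : 0 < η0) (hη1 : 0 < η1)
    (hP0 : IsRangeProj ρ0 P0)
    (hT0 : 0 < (P0 * ρ1).trace.re)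
    (hregime : Real.sqrt η0 * (msqrt (msqrt ρ0 * ρ1 * msqrt ρ0)).trace.re ≤
      Real.sqrt η1 * (P0 * ρ1).trace.re)
    (hE0 : E0.PosSemidef) (hE1 : E1.PosSemidef) (hEq : Eq.PosSemidef)
    (hsum : E0 + E1 + Eq = 1)
    (husd0 : (E0 * ρ1).trace = 0) (husd1 : (E1 * ρ0).trace = 0) :
    η0 * ((msqrt (msqrt ρ0 * ρ1 * msqrt ρ0)).trace.re) ^ 2 / (P0 * ρ1).trace.re +
        η1 * (P0 * ρ1).trace.re ≤
      η0 * (Eq * ρ0).trace.re + η1 * (Eq * ρ1).trace.re := by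
  set F := (msqrt (msqrt ρ0 * ρ1 * msqrt ρ0)).trace.re
  set T := (P0 * ρ1).trace.re
  have hT : T ≤ (Eq * ρ1).trace.re :=
    hP0.re_trace_mul_le hρ0 hρ1 hE0 hE1 hEq hsum husd0 husd1
  have hF : F ^ 2 ≤ (Eq * ρ0).trace.re * (Eq * ρ1).trace.re :=
    sq_re_trace_msqrt_le_of_usd hρ0 hρ1 hE0 hE1 hEq hsum husd0 husd1
  have hregime_sq : η0 * F ^ 2 ≤ η1 * T ^ 2 := by
    have hF0 : 0 ≤ F := (posSemidef_msqrt (msqrt ρ0 * ρ1 * msqrt ρ0)).trace_nonneg.1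
    have h := pow_le_pow_left₀ (mul_nonneg (Real.sqrt_nonneg _) hF0) hregime 2
    rwa [mul_pow, mul_pow, Real.sq_sqrt hη0.le, Real.sq_sqrt hη1.le] at h
  calc η0 * F ^ 2 / T + η1 * T
      ≤ η0 * F ^ 2 / (Eq * ρ1).trace.re + η1 * (Eq * ρ1).trace.re :=
        div_add_mul_le_div_add_mul (by positivity) hT0 hT hregime_sq
    _ ≤ η0 * (Eq * ρ0).trace.re + η1 * (Eq * ρ1).trace.re := by
        gcongr
        rw [div_le_iff₀ (hT0.trans_le hT), mul_assoc]
        exact mul_le_mul_of_nonneg_left hF hη0.le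

/-- **Theorem 3, third regime.** If `√η0 · F ≤ √η1 · Tr(P0 ρ1)`, then any USD
POVM has failure probability `Q ≥ η0·F²/Tr(P0 ρ1) + η1·Tr(P0 ρ1)`. -/
theorem failure_bound_third_regime {n : ℕ}
    (ρ0 ρ1 E0 E1 Eq P0 : Matrix (Fin n) (Fin n) ℂ)
    (hρ0 : ρ0.PosSemidef) (hρ0tr : ρ0.trace = 1)
    (hρ1 : ρ1.PosSemidef) (hρ1tr : ρ1.trace = 1)
    (η0 η1 : ℝ) (hη0 : 0 < η0) (hη1 : 0 < η1) (hη : η0 + η1 = 1)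
    (hP0 : IsRangeProj ρ0 P0)
    (hF : 0 < (msqrt (msqrt ρ0 * ρ1 * msqrt ρ0)).trace.re)
    (hT0 : 0 < (P0 * ρ1).trace.re)
    (hregime : Real.sqrt η0 * (msqrt (msqrt ρ0 * ρ1 * msqrt ρ0)).trace.re ≤
      Real.sqrt η1 * (P0 * ρ1).trace.re)
    (hE0 : E0.PosSemidef) (hE1 : E1.PosSemidef) (hEq : Eq.PosSemidef)
    (hsum : E0 + E1 + Eq = 1)
    (husd0 : (E0 * ρ1).trace = 0) (husd1 : (E1 * ρ0).trace = 0) :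
    η0 * ((msqrt (msqrt ρ0 * ρ1 * msqrt ρ0)).trace.re) ^ 2 / (P0 * ρ1).trace.re +
        η1 * (P0 * ρ1).trace.re ≤
      η0 * (Eq * ρ0).trace.re + η1 * (Eq * ρ1).trace.re :=
  failure_bound_third_regime_general ρ0 ρ1 E0 E1 Eq P0 hρ0 hρ1 η0 η1 hη0 hη1 hP0 hT0 hregime hE0 hE1
    hEq hsum husd0 husd1
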